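/- For every natural number n, the torus board (5+2n)′×4′ does not admit a fault-free domino tiling. -/

import Mathlib

/-- Adjacency on the torus board `a′ × b′`: cells `(i,j)` and `(i+1,j)` with
addition in `ZMod a` (vertical neighbors, wrapping around) or `(i,j)` and
`(i,j+1)` with addition in `ZMod b` (horizontal neighbors, wrapping around). -/
def torAdj (a b : ℕ) (c d : ZMod a × ZMod b) : Prop :=
  (c.2 = d.2 ∧ (d.1 = c.1 + 1 ∨ c.1 = d.1 + 1)) ∨
  (c.1 = d.1 ∧ (d.2 = c.2 + 1 ∨ c.2 = d.2 + 1))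

/-- A tiling of the torus board: a set of dominoes (unordered pairs of adjacent
cells) such that every cell belongs to exactly one domino. -/
def torIsTiling (a b : ℕ) (T : Set (Sym2 (ZMod a × ZMod b))) : Prop :=
  (∀ p ∈ T, ∃ c d, torAdj a b c d ∧ p = s(c, d)) ∧
  (∀ x : ZMod a × ZMod b, ∃! p, p ∈ T ∧ x ∈ p)

/-- A tiling of the torus board is fault-free if every horizontal fault-line
(between rows `i` and `i+1`, for `i : ZMod a`) and every vertical fault-line
(between columns `j` and `j+1`, for `j : ZMod b`) is crossed by some domino. -/
def torFaultFree (a b : ℕ) (T : Set (Sym2 (ZMod a × ZMod b))) : Prop :=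
  (∀ i : ZMod a, ∃ j : ZMod b, s((i, j), (i + 1, j)) ∈ T) ∧
  (∀ j : ZMod b, ∃ i : ZMod a, s((i, j), (i, j + 1)) ∈ T)

/-- The torus board `a′ × b′` admits a fault-free domino tiling. -/
def torFaultFreeTileable (a b : ℕ) : Prop :=
  ∃ T : Set (Sym2 (ZMod a × ZMod b)), torIsTiling a b T ∧ torFaultFree a b T

/-! Give column `j` the sign `(-1) ^ j`, which is consistent around the torus as the width `4` is
even. Every cell of a row is covered exactly once and a horizontal domino covers one cell of each
sign, so the signed counts of the vertical dominoes crossing the two horizontal fault-lines that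
bound a row are opposite. Going once around an odd number of rows, these signed counts must all
vanish, so every horizontal fault-line is crossed an even number of times, hence at least twice
if the tiling is fault-free. Then the vertical dominoes alone fill all four cells of every row,
and no domino crosses a vertical fault-line. -/

open scoped Classical

namespace ZMod

theorem sum_eq_zero_of_add_one_eq_neg {b : ℕ} [NeZero b] {χ : ZMod b → ℤ}
    (hχ : ∀ j, χ (j + 1) = -χ j) : ∑ j, χ j = 0 := by
  have h := Fintype.sum_equiv (Equiv.addRight 1) (fun j => -χ j) χ fun j => (hχ j).symm
  rw [Finset.sum_neg_distrib] at h
  linarith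

theorem eq_zero_of_odd_of_add_one_eq_neg {a : ℕ} (ha : Odd a) {f : ZMod a → ℤ}
    (hf : ∀ i, f (i + 1) = -f i) (i : ZMod a) : f i = 0 := by
  have : NeZero a := ⟨ha.pos.ne'⟩
  have hpow (k : ℕ) : f k = (-1) ^ k * f 0 := by
    induction k with
    | zero => simp
    | succ k ih => rw [Nat.cast_succ, hf, ih, pow_succ]; ring
  have h0 : f 0 = 0 := by
    have := hpow a
    rw [ZMod.natCast_self, ha.neg_one_pow] at this
    linarith
  rw [← ZMod.natCast_zmod_val i, hpow, h0, mul_zero]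

def altSign {b : ℕ} (j : ZMod b) : ℤ := (-1) ^ j.val

theorem altSign_add_one {b : ℕ} [NeZero b] (hb : Even b) (j : ZMod b) :
    altSign (j + 1) = -altSign j := by
  have hb1 : 1 < b := by
    obtain ⟨k, hk⟩ := hb
    have := NeZero.ne b
    omega
  rw [altSign, altSign, ZMod.val_add, ZMod.val_one_eq_one_mod, Nat.mod_eq_of_lt hb1,
    neg_one_pow_eq_pow_mod_two, Nat.mod_mod_of_dvd _ hb.two_dvd, ← neg_one_pow_eq_pow_mod_two,
    pow_succ, mul_neg_one]

theorem odd_altSign {b : ℕ} (j : ZMod b) : Odd (altSign j) :=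
  odd_neg_one.pow

end ZMod

theorem torAdj_comm {a b : ℕ} {c d : ZMod a × ZMod b} : torAdj a b c d ↔ torAdj a b d c := by
  unfold torAdj
  constructor <;> rintro (⟨h, h' | h'⟩ | ⟨h, h' | h'⟩) <;> simp_all

theorem torAdj_iff {a b : ℕ} {c d : ZMod a × ZMod b} :
    torAdj a b c d ↔ d = (c.1 + 1, c.2) ∨ d = (c.1 - 1, c.2) ∨ d = (c.1, c.2 + 1) ∨
      d = (c.1, c.2 - 1) := by
  obtain ⟨c1, c2⟩ := c
  obtain ⟨d1, d2⟩ := d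
  simp only [torAdj, Prod.mk.injEq, eq_sub_iff_add_eq]
  tauto

noncomputable def crossingWeight {a b : ℕ} [NeZero b] (T : Set (Sym2 (ZMod a × ZMod b)))
    (w : ZMod b → ℤ) (i : ZMod a) : ℤ :=
  ∑ j, if s((i, j), (i + 1, j)) ∈ T then w j else 0

theorem le_crossingWeight {a b : ℕ} [NeZero b] {T : Set (Sym2 (ZMod a × ZMod b))}
    {w : ZMod b → ℤ} (hw : 0 ≤ w) {i : ZMod a} {j : ZMod b} (h : s((i, j), (i + 1, j)) ∈ T) :
    w j ≤ crossingWeight T w i := by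
  have := Finset.single_le_sum (f := fun k => if s((i, k), (i + 1, k)) ∈ T then w k else 0)
    (fun k _ => by split_ifs; exacts [hw k, le_rfl]) (Finset.mem_univ j)
  simpa [crossingWeight, h] using this

namespace torIsTiling

variable {a b : ℕ} {T : Set (Sym2 (ZMod a × ZMod b))}

theorem exists_adj_forall_mem_iff (ht : torIsTiling a b T) (x : ZMod a × ZMod b) :
    ∃ y, torAdj a b x y ∧ ∀ p, x ∈ p → (p ∈ T ↔ p = s(x, y)) := by
  obtain ⟨p, ⟨hpT, hxp⟩, hp⟩ := ht.2 x
  obtain ⟨c, d, hcd, rfl⟩ := ht.1 p hpT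
  have key : ∀ q, x ∈ q → (q ∈ T ↔ q = s(c, d)) := fun q hxq =>
    ⟨fun hq => hp q ⟨hq, hxq⟩, fun h => h ▸ hpT⟩
  rcases Sym2.mem_iff.1 hxp with rfl | rfl
  · exact ⟨d, hcd, key⟩
  · exact ⟨c, torAdj_comm.1 hcd, by simpa only [Sym2.eq_swap] using key⟩

theorem cell_indicator_sum (ht : torIsTiling a b T) (ha : (2 : ZMod a) ≠ 0)
    (hb : (2 : ZMod b) ≠ 0) (i : ZMod a) (j : ZMod b) :
    ((if s((i - 1, j), (i, j)) ∈ T then 1 else 0) + (if s((i, j), (i + 1, j)) ∈ T then 1 else 0) +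
      (if s((i, j - 1), (i, j)) ∈ T then 1 else 0) +
      (if s((i, j), (i, j + 1)) ∈ T then 1 else 0) : ℤ) = 1 := by
  obtain ⟨y, hy, hT⟩ := ht.exists_adj_forall_mem_iff (i, j)
  rw [Sym2.eq_swap (a := (i - 1, j)), Sym2.eq_swap (a := (i, j - 1))]
  simp only [hT _ (Sym2.mem_mk_left _ _), Sym2.congr_right]
  -- the four neighbours of `(i, j)` are distinct
  have ha1 : (1 : ZMod a) ≠ 0 := fun h => ha (by linear_combination 2 * h)
  have hb1 : (1 : ZMod b) ≠ 0 := fun h => hb (by linear_combination 2 * h)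
  have ha2 : (-1 : ZMod a) ≠ 1 := fun h => ha (by linear_combination -h)
  have hb2 : (-1 : ZMod b) ≠ 1 := fun h => hb (by linear_combination -h)
  rcases torAdj_iff.1 hy with rfl | rfl | rfl | rfl <;>
    simp [sub_eq_add_neg, ha1, hb1, ha2, hb2, ha2.symm, hb2.symm]

variable [NeZero b]

theorem row_weight_eq (ht : torIsTiling a b T) (ha : (2 : ZMod a) ≠ 0) (hb : (2 : ZMod b) ≠ 0)
    (w : ZMod b → ℤ) (i : ZMod a) :
    crossingWeight T w (i - 1) + crossingWeight T w i +
      ∑ j, (if s((i, j), (i, j + 1)) ∈ T then w j + w (j + 1) else 0) = ∑ j, w j := by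
  have hcell (j : ZMod b) : w j = (if s((i - 1, j), (i, j)) ∈ T then w j else 0) +
      (if s((i, j), (i + 1, j)) ∈ T then w j else 0) +
      (if s((i, j - 1), (i, j)) ∈ T then w j else 0) +
      (if s((i, j), (i, j + 1)) ∈ T then w j else 0) := by
    simpa only [mul_add, mul_ite, mul_one, mul_zero] using
      (congrArg (w j * ·) (ht.cell_indicator_sum ha hb i j)).symm
  have hshift : ∑ j, (if s((i, j - 1), (i, j)) ∈ T then w j else 0) =
      ∑ j, (if s((i, j), (i, j + 1)) ∈ T then w (j + 1) else 0) :=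
    (Fintype.sum_equiv (Equiv.addRight 1) _ _ fun j => by simp).symm
  rw [Fintype.sum_congr _ _ hcell]
  simp only [Finset.sum_add_distrib, hshift, crossingWeight, sub_add_cancel, ite_add_zero]
  ring

theorem crossingWeight_sub_one_add_crossingWeight (ht : torIsTiling a b T)
    (ha : (2 : ZMod a) ≠ 0) (hb : (2 : ZMod b) ≠ 0) {χ : ZMod b → ℤ}
    (hχ : ∀ j, χ (j + 1) = -χ j) (i : ZMod a) :
    crossingWeight T χ (i - 1) + crossingWeight T χ i = 0 := by
  simpa [hχ, ZMod.sum_eq_zero_of_add_one_eq_neg hχ] using ht.row_weight_eq ha hb χ i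

theorem even_crossingWeight_one (ht : torIsTiling a b T) (ha : Odd a) (ha2 : (2 : ZMod a) ≠ 0)
    (hb : Even b) (hb2 : (2 : ZMod b) ≠ 0) (i : ZMod a) : Even (crossingWeight T 1 i) := by
  have hsign : crossingWeight T ZMod.altSign i = 0 := by
    refine ZMod.eq_zero_of_odd_of_add_one_eq_neg ha (fun i => ?_) i
    have := ht.crossingWeight_sub_one_add_crossingWeight ha2 hb2 (ZMod.altSign_add_one hb) (i + 1)
    rw [add_sub_cancel_right] at this
    linarith
  have hparity : Even (crossingWeight T ZMod.altSign i - crossingWeight T 1 i) := by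
    rw [crossingWeight, crossingWeight, ← Finset.sum_sub_distrib]
    refine Finset.even_sum _ fun j _ => ?_
    split_ifs
    · exact (ZMod.odd_altSign j).sub_odd odd_one
    · simp
  simpa [hsign] using hparity

end torIsTiling

/-- For every natural number `n`, the torus board `(5+2n)′ × 4′` does not admit
a fault-free domino tiling. -/
theorem tor_not_faultFree_52n'4' :
    ∀ n : ℕ, ¬ torFaultFreeTileable (5 + 2 * n) 4 := by
  rintro n ⟨T, ht, hrows, hcols⟩
  have ha : Odd (5 + 2 * n) := ⟨n + 2, by ring⟩
  have ha2 : (2 : ZMod (5 + 2 * n)) ≠ 0 := fun h => by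
    have := Nat.le_of_dvd two_pos ((ZMod.natCast_eq_zero_iff 2 _).1 (by exact_mod_cast h))
    omega
  have hb2 : (2 : ZMod 4) ≠ 0 := by decide
  have hcut (i : ZMod (5 + 2 * n)) : 2 ≤ crossingWeight T 1 i := by
    obtain ⟨j, hj⟩ := hrows i
    obtain ⟨k, hk⟩ := ht.even_crossingWeight_one ha ha2 (by decide) hb2 i
    have := le_crossingWeight zero_le_one hj
    simp only [Pi.one_apply] at this
    omega
  obtain ⟨i, hi⟩ := hcols 0
  have hrow := ht.row_weight_eq ha2 hb2 1 i
  simp only [Pi.one_apply, Finset.sum_const, Finset.card_univ, ZMod.card, nsmul_eq_mul,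
    Nat.cast_ofNat, mul_one] at hrow
  have hhoriz := Finset.single_le_sum
    (f := fun j => if s((i, j), (i, j + 1)) ∈ T then (1 + 1 : ℤ) else 0)
    (fun k _ => by split_ifs <;> simp) (Finset.mem_univ 0)
  simp only [hi, if_true] at hhoriz
  linarith [hcut (i - 1), hcut i]
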